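/- Let k = 4m+3 for a non-negative integer m, let x_i, y_i, z_i ∈ {0,1} for 0 ≤ i ≤ n, and define S_t = Σ_{i=n-t}^n (x_i + z_i - k y_i) 2^i. Suppose (2m+2)·2^{n-t} ≤ S_t < k·2^{n-t} and t < n. If (x_{n-t-1}, y_{n-t-1}, z_{n-t-1}) = (1,0,1) or (0,0,0), then S_{t+1} ≥ k·2^{n-t-1}. -/

import Mathlib

/-!
Passing from `S_t` to `S_{t+1}` adds the digit term `(x + z - k y) 2^(n-t-1)`, which is `2^(n-t)` or
`0` in the two cases, hence nonnegative; and the lower bound `(2m+2) 2^(n-t) = (4m+4) 2^(n-t-1)`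
on `S_t` already exceeds `k 2^(n-t-1)`.
-/

/-- `S_t = Σ_{i=n-t}^n (x_i + z_i - k y_i) 2^i` as an integer. -/
def Spoly (k n : ℕ) (x y z : ℕ → ℕ) (t : ℕ) : ℤ :=
  ∑ i ∈ Finset.Icc (n - t) n, ((x i : ℤ) + (z i : ℤ) - (k : ℤ) * (y i : ℤ)) * 2 ^ i

theorem Spoly_succ (k n : ℕ) (x y z : ℕ → ℕ) {t : ℕ} (ht : t < n) :
    Spoly k n x y z (t + 1) =
      ((x (n - t - 1) : ℤ) + (z (n - t - 1) : ℤ) - (k : ℤ) * (y (n - t - 1) : ℤ))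
          * 2 ^ (n - t - 1) + Spoly k n x y z t := by
  have hIcc : Finset.Icc (n - (t + 1)) n = insert (n - t - 1) (Finset.Icc (n - t) n) := by
    rw [Nat.sub_sub, ← Finset.insert_Icc_add_one_left_eq_Icc (by omega),
      show n - (t + 1) + 1 = n - t by omega]
  have hnotMem : n - t - 1 ∉ Finset.Icc (n - t) n := by
    simp only [Finset.mem_Icc]
    omega
  rw [Spoly, hIcc, Finset.sum_insert hnotMem, Spoly]

theorem stmt_10_general (m n t : ℕ) (ht : t < n)
    (x y z : ℕ → ℕ)
    (hS0 : (2 * m + 2 : ℤ) * 2 ^ (n - t) ≤ Spoly (4 * m + 3) n x y z t)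
    (hcase : (x (n - t - 1), y (n - t - 1), z (n - t - 1)) = (1, 0, 1) ∨
             (x (n - t - 1), y (n - t - 1), z (n - t - 1)) = (0, 0, 0)) :
    Spoly (4 * m + 3) n x y z (t + 1) ≥ (4 * m + 3 : ℤ) * 2 ^ (n - t - 1) := by
  have hdigit : 0 ≤ (x (n - t - 1) : ℤ) + (z (n - t - 1) : ℤ)
      - ((4 * m + 3 : ℕ) : ℤ) * (y (n - t - 1) : ℤ) := by
    rcases hcase with h | h <;> simp only [Prod.mk.injEq] at h <;> simp [h]
  have hpow : (2 : ℤ) ^ (n - t) = 2 * 2 ^ (n - t - 1) := by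
    rw [← pow_succ']
    congr 1
    omega
  rw [Spoly_succ _ _ _ _ _ ht, ge_iff_le]
  calc (4 * m + 3 : ℤ) * 2 ^ (n - t - 1)
      ≤ (2 * m + 2 : ℤ) * 2 ^ (n - t) := by
        rw [hpow, ← mul_assoc]
        gcongr
        linarith
    _ ≤ Spoly (4 * m + 3) n x y z t := hS0
    _ ≤ _ := le_add_of_nonneg_left (mul_nonneg hdigit (by positivity))

theorem stmt_10 (m n t : ℕ) (ht : t < n)
    (x y z : ℕ → ℕ)
    (hx : ∀ i ≤ n, x i ≤ 1) (hy : ∀ i ≤ n, y i ≤ 1) (hz : ∀ i ≤ n, z i ≤ 1)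
    (hS0 : (2 * m + 2 : ℤ) * 2 ^ (n - t) ≤ Spoly (4 * m + 3) n x y z t)
    (hS1 : Spoly (4 * m + 3) n x y z t < (4 * m + 3 : ℤ) * 2 ^ (n - t))
    (hcase : (x (n - t - 1), y (n - t - 1), z (n - t - 1)) = (1, 0, 1) ∨
             (x (n - t - 1), y (n - t - 1), z (n - t - 1)) = (0, 0, 0)) :
    Spoly (4 * m + 3) n x y z (t + 1) ≥ (4 * m + 3 : ℤ) * 2 ^ (n - t - 1) :=
  stmt_10_general m n t ht x y z hS0 hcase
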